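/- If P = e_1…e_k is a funnel all of whose arc gains lie in [−B, B], then every contiguous subpath e_i…e_j (1 ≤ i ≤ j ≤ k) of P is a funnel. -/

import Mathlib

/-!
If the vertex gains of a path stay in an interval of length at most `B`, every 2- or 3-arc
subpath is traversable, so a path without monotone such subpaths must alternate strictly in
the sign of its arc gains, and the sequence `|g t|` can have no interior local minimum. An
arc-bounded path with arc gains in `[-B, B]` has its vertex gains in such an interval. Being
first-arc-bounded then forces `|g 0| ≥ |g 1|`, hence `|g t|` is non-increasing; being
last-arc-bounded forces it to be non-decreasing. Conversely, by Leibniz's bound on alternating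
sums, an alternating path whose `|g t|` is non-increasing (non-decreasing) is first- (last-)
arc-bounded, and both properties pass to contiguous subpaths.
-/

open Finset

namespace EV

noncomputable section

/-- Charge after traversing `i` arcs of a path with arc gains `g`, battery capacity `B`,
initial charge `b`. -/
def charge (B b : ℝ) (g : ℕ → ℝ) : ℕ → ℝ
  | 0 => b
  | i + 1 => min (charge B b g i + g i) B

/-- The traversal of the path with `n` arcs is feasible from initial charge `b`. -/
def Feasible (B b : ℝ) (g : ℕ → ℝ) (n : ℕ) : Prop :=
  ∀ i < n, 0 ≤ charge B b g i + g i

open Classical in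
/-- Maximum final charge `α_b(P)` for a path `P` with `n` arc gains `g`,
as an extended real (`⊥ = -∞` if the traversal is infeasible). -/
def alpha (B b : ℝ) (g : ℕ → ℝ) (n : ℕ) : EReal :=
  if Feasible B b g n then ((charge B b g n : ℝ) : EReal) else ⊥

/-- Gain of the `i`-th vertex (0-indexed): the sum of the first `i` arc gains. -/
def vGain (g : ℕ → ℝ) (i : ℕ) : ℝ := ∑ t ∈ Finset.range i, g t

/-- `P` is traversable: `α_B(P) ≥ 0`, i.e. feasible from a full battery. -/
def Traversable (B : ℝ) (g : ℕ → ℝ) (n : ℕ) : Prop := Feasible B B g n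

/-- `C` is a charge drop schedule for a path with `n` arcs (vertices `0,…,n`):
no drop at the first vertex, all drops nonnegative. -/
def Schedule (C : ℕ → ℝ) (n : ℕ) : Prop := C 0 = 0 ∧ ∀ i ≤ n, 0 ≤ C i

/-- Gain of vertex `i` with respect to the charge drop schedule `C`. -/
def cGain (g C : ℕ → ℝ) (i : ℕ) : ℝ := vGain g i - ∑ t ∈ Finset.range (i + 1), C t

/-- `P` (with `n` arcs) is ascending with respect to the schedule `C`. -/
def AscendingC (B : ℝ) (g C : ℕ → ℝ) (n : ℕ) : Prop :=
  Traversable B g n ∧ ∀ i ≤ n, 0 ≤ cGain g C i ∧ cGain g C i ≤ cGain g C n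

/-- `P` (with `n` arcs) is descending with respect to the schedule `C`. -/
def DescendingC (B : ℝ) (g C : ℕ → ℝ) (n : ℕ) : Prop :=
  Traversable B g n ∧ ∀ i ≤ n, cGain g C n ≤ cGain g C i ∧ cGain g C i ≤ 0

/-- `P` is monotone with respect to the schedule `C`. -/
def MonotoneC (B : ℝ) (g C : ℕ → ℝ) (n : ℕ) : Prop :=
  AscendingC B g C n ∨ DescendingC B g C n

/-- Ascending with respect to the zero schedule. -/
def Ascending (B : ℝ) (g : ℕ → ℝ) (n : ℕ) : Prop := AscendingC B g (fun _ => 0) n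

/-- Descending with respect to the zero schedule. -/
def Descending (B : ℝ) (g : ℕ → ℝ) (n : ℕ) : Prop := DescendingC B g (fun _ => 0) n

/-- Monotone with respect to the zero schedule. -/
def MonotonePath (B : ℝ) (g : ℕ → ℝ) (n : ℕ) : Prop := Ascending B g n ∨ Descending B g n

/-- The contiguous subpath whose arcs start at arc index `a`. -/
def SubPath (g : ℕ → ℝ) (a : ℕ) : ℕ → ℝ := fun t => g (a + t)

/-- Restriction of a charge drop schedule to the subpath starting at vertex `a`:
no drop at the subpath's first vertex. -/
def restrict (C : ℕ → ℝ) (a : ℕ) : ℕ → ℝ := fun t => if t = 0 then 0 else C (a + t)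

/-- First-arc-bounded with respect to a schedule `C` (no drop at the second vertex,
and all vertex gains lie between the gains of the first two vertices). -/
def FirstArcBoundedC (g C : ℕ → ℝ) (n : ℕ) : Prop :=
  C 1 = 0 ∧
    ((0 ≤ g 0 ∧ ∀ i ≤ n, 0 ≤ cGain g C i ∧ cGain g C i ≤ g 0) ∨
     (g 0 ≤ 0 ∧ ∀ i ≤ n, g 0 ≤ cGain g C i ∧ cGain g C i ≤ 0))

/-- Last-arc-bounded with respect to a schedule `C` (no drops at the last two vertices,
and all vertex gains lie between the gains of the last two vertices). -/
def LastArcBoundedC (g C : ℕ → ℝ) (n : ℕ) : Prop :=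
  C (n - 1) = 0 ∧ C n = 0 ∧
    ((0 ≤ g (n - 1) ∧ ∀ i ≤ n, cGain g C (n - 1) ≤ cGain g C i ∧ cGain g C i ≤ cGain g C n) ∨
     (g (n - 1) < 0 ∧ ∀ i ≤ n, cGain g C n ≤ cGain g C i ∧ cGain g C i ≤ cGain g C (n - 1)))

/-- First-arc-bounded (zero schedule). -/
def FirstArcBounded (g : ℕ → ℝ) (n : ℕ) : Prop := FirstArcBoundedC g (fun _ => 0) n

/-- Last-arc-bounded (zero schedule). -/
def LastArcBounded (g : ℕ → ℝ) (n : ℕ) : Prop := LastArcBoundedC g (fun _ => 0) n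

/-- Arc-bounded: first- or last-arc-bounded. -/
def ArcBounded (g : ℕ → ℝ) (n : ℕ) : Prop := FirstArcBounded g n ∨ LastArcBounded g n

/-- A funnel: arc-bounded and containing no monotone subpath of 2 or 3 consecutive arcs. -/
def Funnel (B : ℝ) (g : ℕ → ℝ) (n : ℕ) : Prop :=
  ArcBounded g n ∧ ∀ a m, (m = 2 ∨ m = 3) → a + m ≤ n → ¬ MonotonePath B (SubPath g a) m

/-- `j = s̄(i)`: the maximal index `j ≥ i` (among arcs of a path with `n` arcs) such that
the subpath of arcs `i,…,j` is first-arc-bounded. -/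
def IsSbar (g : ℕ → ℝ) (n i j : ℕ) : Prop :=
  i ≤ j ∧ j < n ∧ FirstArcBounded (SubPath g i) (j - i + 1) ∧
    ∀ j', i ≤ j' → j' < n → FirstArcBounded (SubPath g i) (j' - i + 1) → j' ≤ j

/-- `j = s̲(i)`: the minimal index `j ≤ i` such that the subpath of arcs `j,…,i`
is last-arc-bounded. -/
def IsSlow (g : ℕ → ℝ) (n i j : ℕ) : Prop :=
  j ≤ i ∧ i < n ∧ LastArcBounded (SubPath g j) (i - j + 1) ∧
    ∀ j', j' ≤ i → LastArcBounded (SubPath g j') (i - j' + 1) → j ≤ j'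

/-- Arc gains of the walk around a cycle with `m` arc gains `g`, starting at vertex `a`. -/
def cyc (g : ℕ → ℝ) (m a : ℕ) : ℕ → ℝ := fun t => g ((a + t) % m)

/-- A walk of length `ℓ` from `x` to `y` in the directed graph with arc relation `A`. -/
def IsWalk {V : Type*} (A : V → V → Prop) (w : ℕ → V) (ℓ : ℕ) (x y : V) : Prop :=
  w 0 = x ∧ w ℓ = y ∧ ∀ t < ℓ, A (w t) (w (t + 1))

/-- The sequence of arc gains induced by a walk `w` in a graph with gain function `g`. -/
def walkGains {V : Type*} (g : V → V → ℝ) (w : ℕ → V) : ℕ → ℝ :=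
  fun t => g (w t) (w (t + 1))

lemma add_mem_uIcc_zero_iff {a b : ℝ} (hab : a * b ≤ 0) :
    a + b ∈ Set.uIcc 0 a ↔ |b| ≤ |a| := by
  rcases le_total 0 a with ha | ha
  · rw [Set.uIcc_of_le ha, abs_of_nonneg ha, Set.mem_Icc, abs_le]
    constructor <;> intro h <;> constructor <;> nlinarith
  · rw [Set.uIcc_of_ge ha, abs_of_nonpos ha, Set.mem_Icc, abs_le]
    constructor <;> intro h <;> constructor <;> nlinarith

lemma add_mem_uIcc_zero {a b s : ℝ} (hab : a * b ≤ 0) (hba : |b| ≤ |a|)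
    (hs : s ∈ Set.uIcc 0 b) : a + s ∈ Set.uIcc 0 a := by
  have hsub : Set.uIcc (a + 0) (a + b) ⊆ Set.uIcc 0 a :=
    Set.uIcc_subset_uIcc (by simp) ((add_mem_uIcc_zero_iff hab).mpr hba)
  exact hsub (by rw [← Set.image_const_add_uIcc]; exact Set.mem_image_of_mem _ hs)

lemma sub_le_abs_of_mem_uIcc {x y c : ℝ} (hx : x ∈ Set.uIcc 0 c) (hy : y ∈ Set.uIcc 0 c) :
    x - y ≤ |c| :=
  (le_abs_self _).trans <| by
    simpa using Set.abs_sub_le_of_uIcc_subset_uIcc (Set.uIcc_subset_uIcc hy hx)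

section Unimodal

variable {α : Type*} [LinearOrder α] {a : ℕ → α} {n : ℕ}

def NoInteriorMin (a : ℕ → α) (n : ℕ) : Prop :=
  ∀ t, t + 3 ≤ n → ¬ (a (t + 1) ≤ a t ∧ a (t + 1) ≤ a (t + 2))

lemma NoInteriorMin.succ_le (h : NoInteriorMin a n) (hstart : 2 ≤ n → a 1 ≤ a 0) :
    ∀ t, t + 2 ≤ n → a (t + 1) ≤ a t := by
  intro t ht
  induction t with
  | zero => exact hstart ht
  | succ t ih =>
    exact le_of_not_ge fun h' => h t ht ⟨ih (by omega), h'⟩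

lemma NoInteriorMin.le_succ (h : NoInteriorMin a n) (hend : 2 ≤ n → a (n - 2) ≤ a (n - 1)) :
    ∀ t, t + 2 ≤ n → a t ≤ a (t + 1) := by
  suffices ∀ d t, t + 2 + d = n → a t ≤ a (t + 1) from
    fun t ht => this (n - (t + 2)) t (by omega)
  intro d
  induction d with
  | zero =>
    rintro t rfl
    simpa using hend (by omega)
  | succ d ih =>
    intro t ht
    exact le_of_not_ge fun h' => h t (by omega) ⟨h', ih (t + 1) (by omega)⟩

end Unimodal

lemma vGain_succ (g : ℕ → ℝ) (i : ℕ) : vGain g (i + 1) = vGain g i + g i :=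
  sum_range_succ g i

lemma vGain_subPath (g : ℕ → ℝ) (a i : ℕ) :
    vGain (SubPath g a) i = vGain g (a + i) - vGain g a := by
  rw [vGain, vGain, sum_range_add]
  simp [vGain, SubPath]

lemma subPath_subPath (g : ℕ → ℝ) (a b : ℕ) :
    SubPath (SubPath g a) b = SubPath g (a + b) := by
  funext t
  simp [SubPath, add_assoc]

/-- `j` is the last vertex up to `i` at which the battery is full. -/
lemma exists_le_charge (B : ℝ) (g : ℕ → ℝ) (i : ℕ) :
    ∃ j ≤ i, B + vGain g i - vGain g j ≤ charge B B g i := by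
  induction i with
  | zero => exact ⟨0, le_rfl, by simp [charge]⟩
  | succ i ih =>
    obtain ⟨j, hj, hc⟩ := ih
    rcases le_total (charge B B g i + g i) B with h | h
    · exact ⟨j, by omega, by rw [charge, min_eq_left h, vGain_succ]; linarith⟩
    · exact ⟨i + 1, le_rfl, by rw [charge, min_eq_right h]; linarith⟩

section Traversal

variable {B : ℝ} {g : ℕ → ℝ} {k : ℕ}

lemma traversable_of_drop_le (hdrop : ∀ i j, i < j → j ≤ k → vGain g i - vGain g j ≤ B) :
    Traversable B g k := by
  intro i hi
  obtain ⟨j, hj, hc⟩ := exists_le_charge B g i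
  have := hdrop j (i + 1) (by omega) hi
  rw [vGain_succ] at this
  linarith

lemma ascending_of_drop_le (hdrop : ∀ i j, i < j → j ≤ k → vGain g i - vGain g j ≤ B)
    (hbd : ∀ i ≤ k, 0 ≤ vGain g i ∧ vGain g i ≤ vGain g k) : Ascending B g k :=
  ⟨traversable_of_drop_le hdrop, by simpa [cGain] using hbd⟩

lemma descending_of_drop_le (hdrop : ∀ i j, i < j → j ≤ k → vGain g i - vGain g j ≤ B)
    (hbd : ∀ i ≤ k, vGain g k ≤ vGain g i ∧ vGain g i ≤ 0) : Descending B g k :=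
  ⟨traversable_of_drop_le hdrop, by simpa [cGain] using hbd⟩

end Traversal

def Alternating (g : ℕ → ℝ) (n : ℕ) : Prop := ∀ t, t + 2 ≤ n → g t * g (t + 1) ≤ 0

lemma Alternating.subPath {g : ℕ → ℝ} {n a m : ℕ} (h : Alternating g n)
    (ham : a + m ≤ n) : Alternating (SubPath g a) m :=
  fun t ht => h (a + t) (by omega)

section ShortSubpaths

variable {B : ℝ} {g : ℕ → ℝ} {n : ℕ}

def GainSpreadLE (B : ℝ) (g : ℕ → ℝ) (n : ℕ) : Prop :=
  ∀ i ≤ n, ∀ j ≤ n, vGain g i - vGain g j ≤ B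

def NoShortMonotone (B : ℝ) (g : ℕ → ℝ) (n : ℕ) : Prop :=
  ∀ a m, (m = 2 ∨ m = 3) → a + m ≤ n → ¬ MonotonePath B (SubPath g a) m

lemma subPath_drop_le (hspread : GainSpreadLE B g n) {t k : ℕ} (ht : t + k ≤ n) :
    ∀ i j, i < j → j ≤ k → vGain (SubPath g t) i - vGain (SubPath g t) j ≤ B := by
  intro i j _ hj
  rw [vGain_subPath, vGain_subPath]
  linarith [hspread (t + i) (by omega) (t + j) (by omega)]

lemma mul_neg_of_noShortMonotone (hspread : GainSpreadLE B g n) (hmono : NoShortMonotone B g n)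
    {t : ℕ} (ht : t + 2 ≤ n) : g t * g (t + 1) < 0 := by
  have hdrop := subPath_drop_le hspread ht
  by_contra! hnn
  rcases mul_nonneg_iff.mp hnn with ⟨h0, h1⟩ | ⟨h0, h1⟩
  · refine hmono t 2 (by norm_num) ht (Or.inl (ascending_of_drop_le hdrop fun i hi => ?_))
    interval_cases i <;> simp only [vGain, sum_range_succ, sum_range_zero, SubPath, add_zero,
      zero_add] <;> constructor <;> linarith
  · refine hmono t 2 (by norm_num) ht (Or.inr (descending_of_drop_le hdrop fun i hi => ?_))
    interval_cases i <;> simp only [vGain, sum_range_succ, sum_range_zero, SubPath, add_zero,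
      zero_add] <;> constructor <;> linarith

lemma alternating_of_noShortMonotone (hspread : GainSpreadLE B g n)
    (hmono : NoShortMonotone B g n) : Alternating g n :=
  fun _ ht => (mul_neg_of_noShortMonotone hspread hmono ht).le

lemma noInteriorMin_abs_of_noShortMonotone (hspread : GainSpreadLE B g n)
    (hmono : NoShortMonotone B g n) : NoInteriorMin (fun t => |g t|) n := by
  rintro t ht ⟨h10, h12⟩
  have hdrop := subPath_drop_le hspread ht
  have s01 := mul_neg_of_noShortMonotone hspread hmono (t := t) (by omega)
  have s12 : g (t + 1) * g (t + 2) < 0 :=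
    mul_neg_of_noShortMonotone hspread hmono (t := t + 1) (by omega)
  rcases mul_neg_iff.mp s01 with ⟨h0, h1⟩ | ⟨h0, h1⟩
  · have h2 := pos_of_mul_neg_right s12 h1.le
    simp only [abs_of_pos h0, abs_of_neg h1, abs_of_pos h2] at h10 h12
    refine hmono t 3 (by norm_num) ht (Or.inl (ascending_of_drop_le hdrop fun i hi => ?_))
    interval_cases i <;> simp only [vGain, sum_range_succ, sum_range_zero, SubPath, add_zero,
      zero_add] <;> constructor <;> linarith
  · have h2 := neg_of_mul_neg_right s12 h1.le
    simp only [abs_of_neg h0, abs_of_pos h1, abs_of_neg h2] at h10 h12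
    refine hmono t 3 (by norm_num) ht (Or.inr (descending_of_drop_le hdrop fun i hi => ?_))
    interval_cases i <;> simp only [vGain, sum_range_succ, sum_range_zero, SubPath, add_zero,
      zero_add] <;> constructor <;> linarith

end ShortSubpaths

section Leibniz

variable {g : ℕ → ℝ} {n : ℕ}

/-- Leibniz's bound for alternating sums. -/
lemma vGain_mem_uIcc_of_alternating (halt : Alternating g n)
    (hamp : ∀ t, t + 2 ≤ n → |g (t + 1)| ≤ |g t|) :
    ∀ i ≤ n, vGain g i ∈ Set.uIcc 0 (g 0) := by
  intro i hi
  induction i generalizing g n with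
  | zero => simp [vGain]
  | succ i ih =>
    have hshift : vGain g (i + 1) = g 0 + vGain (SubPath g 1) i := by
      rw [vGain_subPath, add_comm 1 i]
      simp [vGain]
    rcases i with _ | i
    · simp [vGain]
    rw [hshift]
    exact add_mem_uIcc_zero (halt 0 (by omega)) (hamp 0 (by omega))
      (ih (halt.subPath (m := n - 1) (by omega)) (fun t ht => hamp (1 + t) (by omega)) (by omega))

lemma sub_vGain_mem_uIcc_of_alternating (halt : Alternating g n)
    (hamp : ∀ t, t + 2 ≤ n → |g t| ≤ |g (t + 1)|) :
    ∀ i ≤ n, vGain g n - vGain g i ∈ Set.uIcc 0 (g (n - 1)) := by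
  induction n with
  | zero => intro i hi; simp [show i = 0 by omega]
  | succ n ih =>
    intro i hi
    rcases hi.eq_or_lt with rfl | hi
    · simp
    rw [vGain_succ, Nat.add_sub_cancel, add_sub_right_comm, add_comm (vGain g n - vGain g i)]
    rcases n with _ | n
    · simp [show i = 0 by omega, vGain]
    refine add_mem_uIcc_zero ?_ (hamp n (by omega))
      (ih (fun t ht => halt t (by omega)) (fun t ht => hamp t (by omega)) i (by omega))
    rw [mul_comm]
    exact halt n (by omega)

end Leibniz

section ArcBounded

variable {B : ℝ} {g : ℕ → ℝ} {n a m : ℕ}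

lemma firstArcBounded_iff :
    FirstArcBounded g n ↔ ∀ i ≤ n, vGain g i ∈ Set.uIcc 0 (g 0) := by
  simp only [FirstArcBounded, FirstArcBoundedC, cGain, sum_const_zero, sub_zero, true_and]
  constructor
  · rintro (⟨h0, h⟩ | ⟨h0, h⟩) i hi
    · simpa [Set.uIcc_of_le h0] using h i hi
    · simpa [Set.uIcc_of_ge h0] using h i hi
  · intro h
    rcases le_total 0 (g 0) with h0 | h0
    · exact Or.inl ⟨h0, fun i hi => by simpa [Set.uIcc_of_le h0] using h i hi⟩
    · exact Or.inr ⟨h0, fun i hi => by simpa [Set.uIcc_of_ge h0] using h i hi⟩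

lemma lastArcBounded_iff (hn : n ≠ 0) :
    LastArcBounded g n ↔ ∀ i ≤ n, vGain g n - vGain g i ∈ Set.uIcc 0 (g (n - 1)) := by
  obtain ⟨n, rfl⟩ := Nat.exists_eq_succ_of_ne_zero hn
  simp only [LastArcBounded, LastArcBoundedC, cGain, sum_const_zero, sub_zero, true_and,
    Nat.succ_sub_one, vGain_succ]
  constructor
  · rintro (⟨h0, h⟩ | ⟨h0, h⟩) i hi
    · rw [Set.uIcc_of_le h0, Set.mem_Icc]
      constructor <;> linarith [h i hi]
    · rw [Set.uIcc_of_ge h0.le, Set.mem_Icc]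
      constructor <;> linarith [h i hi]
  · intro h
    rcases lt_or_ge (g n) 0 with h0 | h0
    · refine Or.inr ⟨h0, fun i hi => ?_⟩
      have := h i hi
      rw [Set.uIcc_of_ge h0.le, Set.mem_Icc] at this
      constructor <;> linarith
    · refine Or.inl ⟨h0, fun i hi => ?_⟩
      have := h i hi
      rw [Set.uIcc_of_le h0, Set.mem_Icc] at this
      constructor <;> linarith

lemma FirstArcBounded.gainSpreadLE (h : FirstArcBounded g n) (hB : |g 0| ≤ B) :
    GainSpreadLE B g n := fun i hi j hj =>
  (sub_le_abs_of_mem_uIcc (firstArcBounded_iff.mp h i hi)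
    (firstArcBounded_iff.mp h j hj)).trans hB

lemma LastArcBounded.gainSpreadLE (h : LastArcBounded g n) (hn : n ≠ 0)
    (hB : |g (n - 1)| ≤ B) : GainSpreadLE B g n := fun i hi j hj => by
  have := sub_le_abs_of_mem_uIcc ((lastArcBounded_iff hn).mp h j hj)
    ((lastArcBounded_iff hn).mp h i hi)
  linarith

lemma FirstArcBounded.abs_succ_le (h : FirstArcBounded g n)
    (hspread : GainSpreadLE B g n) (hmono : NoShortMonotone B g n) :
    ∀ t, t + 2 ≤ n → |g (t + 1)| ≤ |g t| := by
  refine (noInteriorMin_abs_of_noShortMonotone hspread hmono).succ_le fun hn => ?_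
  have h2 := firstArcBounded_iff.mp h 2 hn
  simp only [vGain, sum_range_succ, sum_range_zero, zero_add] at h2
  exact (add_mem_uIcc_zero_iff (mul_neg_of_noShortMonotone hspread hmono (t := 0) hn).le).mp h2

lemma LastArcBounded.abs_le_succ (h : LastArcBounded g n)
    (hspread : GainSpreadLE B g n) (hmono : NoShortMonotone B g n) :
    ∀ t, t + 2 ≤ n → |g t| ≤ |g (t + 1)| := by
  refine (noInteriorMin_abs_of_noShortMonotone hspread hmono).le_succ fun hn => ?_
  obtain ⟨k, rfl⟩ : ∃ k, n = k + 2 := ⟨n - 2, by omega⟩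
  have h2 := (lastArcBounded_iff (by omega)).mp h k (by omega)
  rw [show k + 2 = k + 1 + 1 from rfl, vGain_succ, vGain_succ] at h2
  simp only [show k + 2 - 1 = k + 1 by omega, show k + 2 - 2 = k by omega] at h2 ⊢
  rw [add_assoc, add_sub_cancel_left, add_comm (g k)] at h2
  have hsign := mul_neg_of_noShortMonotone hspread hmono (t := k) (by omega)
  exact (add_mem_uIcc_zero_iff (by rw [mul_comm]; exact hsign.le)).mp h2

lemma FirstArcBounded.subPath (h : FirstArcBounded g n)
    (hspread : GainSpreadLE B g n) (hmono : NoShortMonotone B g n)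
    (ham : a + m ≤ n) : FirstArcBounded (SubPath g a) m := by
  have hamp := h.abs_succ_le hspread hmono
  refine firstArcBounded_iff.mpr (vGain_mem_uIcc_of_alternating ?_ fun t ht => ?_)
  · exact (alternating_of_noShortMonotone hspread hmono).subPath ham
  · exact hamp (a + t) (by omega)

lemma LastArcBounded.subPath (h : LastArcBounded g n)
    (hspread : GainSpreadLE B g n) (hmono : NoShortMonotone B g n)
    (hm : m ≠ 0) (ham : a + m ≤ n) : LastArcBounded (SubPath g a) m := by
  have hamp := h.abs_le_succ hspread hmono
  refine (lastArcBounded_iff hm).mpr (sub_vGain_mem_uIcc_of_alternating ?_ fun t ht => ?_)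
  · exact (alternating_of_noShortMonotone hspread hmono).subPath ham
  · exact hamp (a + t) (by omega)

end ArcBounded

theorem funnel_subpath_general (B : ℝ) (g : ℕ → ℝ) (n : ℕ)
    (hrange : ∀ i < n, |g i| ≤ B) (hF : Funnel B g n) :
    ∀ a m, 1 ≤ m → a + m ≤ n → Funnel B (SubPath g a) m := by
  intro a m hm ham
  refine ⟨?_, fun a' m' hm' ham' => subPath_subPath g a a' ▸ hF.2 (a + a') m' hm' (by omega)⟩
  rcases hF.1 with hfab | hlab
  · exact Or.inl (hfab.subPath (hfab.gainSpreadLE (hrange 0 (by omega))) hF.2 ham)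
  · have hspread := hlab.gainSpreadLE (by omega) (hrange (n - 1) (by omega))
    exact Or.inr (hlab.subPath hspread hF.2 (by omega) ham)

/-- Every (nonempty) contiguous subpath of a funnel whose arc gains lie in
`[-B,B]` is a funnel. -/
theorem funnel_subpath (B : ℝ) (hB : 0 < B) (g : ℕ → ℝ) (n : ℕ)
    (hrange : ∀ i < n, |g i| ≤ B) (hF : Funnel B g n) :
    ∀ a m, 1 ≤ m → a + m ≤ n → Funnel B (SubPath g a) m :=
  funnel_subpath_general B g n hrange hF

end

end EV
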